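/- arXiv:1012.5732 — 6 statements merged into one kernel-verified Lean document; each statement's English description precedes it below -/
import Mathlib

section
/- Let α be a finite type and let σ, τ be permutations of α. Let π be the permutation of α ⊕ α defined by π(inl x) = inr (σ x) and π(inr y) = inl (τ y). Then every cycle of π has even length, and the cycle type of π equals the multiset obtained by doubling every entry of the cycle type of τ∘σ, together with one cycle of length 2 for each fixed point of τ∘σ: cycleType(π) = map (ℓ ↦ 2ℓ) (cycleType(τ∘σ)) + replicate (number of fixed points of τ∘σ) 2. -/
/-!
Conjugating by `sumCongr 1 σ` reduces to `σ = 1`, i.e. to `inl x ↦ inr x ↦ inl (ρ x)` with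
`ρ = τ * σ`. This is the product of two disjoint permutations: `interleave ρ`, which turns each
`k`-cycle of `ρ` into a `2k`-cycle, and the involution swapping the two copies of each fixed point
of `ρ`, whose cycle type is a list of `2`s.
-/

open Equiv Finset

namespace Equiv.Perm

variable {α : Type*} [DecidableEq α]

/-- Threads the two copies of each cycle `(x₁ … xₖ)` of `f` into the `2k`-cycle
`(inl x₁ inr x₁ inl x₂ inr x₂ … inr xₖ)`; the fixed points of `f` stay fixed in both copies. -/
def interleave (f : Perm α) : Perm (α ⊕ α) where
  toFun := Sum.elim (fun x => if f x = x then .inl x else .inr x)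
    (fun y => if f y = y then .inr y else .inl (f y))
  invFun := Sum.elim (fun x => if f x = x then .inl x else .inr (f⁻¹ x))
    (fun y => if f y = y then .inr y else .inl y)
  left_inv := by
    rintro (x | x) <;> by_cases h : f x = x <;> simp [h]
  right_inv := by
    rintro (x | x) <;> by_cases h : f x = x <;> simp [h, eq_symm_apply]

@[simp]
lemma interleave_apply_inl (f : Perm α) (x : α) :
    interleave f (.inl x) = if f x = x then .inl x else .inr x := rfl

@[simp]
lemma interleave_apply_inr (f : Perm α) (x : α) :
    interleave f (.inr x) = if f x = x then .inr x else .inl (f x) := rfl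

@[simp]
lemma interleave_one : interleave (1 : Perm α) = 1 := by
  ext (x | x) <;> simp

lemma interleave_sq (f : Perm α) : interleave f ^ 2 = sumCongr f f := by
  ext (x | x) <;> by_cases h : f x = x <;> simp [sq, h]

lemma Disjoint.interleave {f g : Perm α} (h : f.Disjoint g) :
    (Perm.interleave f).Disjoint (Perm.interleave g) := by
  rintro (x | x) <;> rcases h x with h' | h' <;> simp [h']

lemma Disjoint.interleave_mul {f g : Perm α} (h : f.Disjoint g) :
    Perm.interleave (f * g) = Perm.interleave f * Perm.interleave g := by
  have hfg : ∀ x, f x = x → f (g x) = g x := fun x hf => by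
    rcases h (g x) with hg | hg
    · exact hg
    · rw [g.injective hg, hf]
  ext (x | x) <;> rcases h x with h' | h' <;> by_cases hg : g x = x <;> simp [h', hg, hfg]

lemma interleave_zpow_two_mul_inl (f : Perm α) (n : ℤ) (x : α) :
    (interleave f ^ (2 * n)) (.inl x) = .inl ((f ^ n) x) := by
  rw [zpow_mul, zpow_two, ← sq, interleave_sq, ← sumCongrHom_apply α α (f, f), ← map_zpow]
  simp

lemma SameCycle.interleave_inl {f : Perm α} {x y : α} (h : f.SameCycle x y) :
    (Perm.interleave f).SameCycle (.inl x) (.inl y) := by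
  obtain ⟨n, rfl⟩ := h
  exact ⟨2 * n, interleave_zpow_two_mul_inl f n x⟩

lemma IsCycle.interleave {f : Perm α} (hf : f.IsCycle) : (Perm.interleave f).IsCycle := by
  obtain ⟨x, hx, hcycle⟩ := hf
  refine ⟨.inl x, by simp [hx], ?_⟩
  rintro (y | y) hy
  · by_cases h : f y = y
    · simp [h] at hy
    · exact (hcycle h).interleave_inl
  · by_cases h : f y = y
    · simp [h] at hy
    · have hinr : Perm.interleave f (.inl y) = .inr y := by simp [h]
      exact hinr ▸ sameCycle_apply_right.2 (hcycle h).interleave_inl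

def swapFixedPoints (f : Perm α) : Perm (α ⊕ α) :=
  Function.Involutive.toPerm
    (Sum.elim (fun x => if f x = x then .inr x else .inl x)
      (fun x => if f x = x then .inl x else .inr x))
    (by rintro (x | x) <;> by_cases h : f x = x <;> simp [h])

@[simp]
lemma swapFixedPoints_apply_inl (f : Perm α) (x : α) :
    swapFixedPoints f (.inl x) = if f x = x then .inr x else .inl x := rfl

@[simp]
lemma swapFixedPoints_apply_inr (f : Perm α) (x : α) :
    swapFixedPoints f (.inr x) = if f x = x then .inl x else .inr x := rfl

lemma swapFixedPoints_sq (f : Perm α) : swapFixedPoints f ^ 2 = 1 := by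
  ext (x | x) <;> by_cases h : f x = x <;> simp [sq, h]

lemma disjoint_interleave_swapFixedPoints (f : Perm α) :
    (interleave f).Disjoint (swapFixedPoints f) := by
  rintro (x | x) <;> by_cases h : f x = x <;> simp [h]

lemma interleave_mul_swapFixedPoints (f : Perm α) :
    interleave f * swapFixedPoints f = sumCongr f 1 * sumComm α α := by
  ext (x | x) <;> by_cases h : f x = x <;> simp [h]

variable [Fintype α]

lemma support_interleave (f : Perm α) :
    (interleave f).support = f.support.disjSum f.support := by
  ext (x | x) <;> by_cases h : f x = x <;> simp [h]

lemma cycleType_interleave (f : Perm α) :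
    (interleave f).cycleType = f.cycleType.map (2 * ·) := by
  induction f using cycle_induction_on with
  | base_one => simp
  | base_cycles f hf =>
    rw [hf.cycleType, hf.interleave.cycleType, support_interleave, card_disjSum]
    simp [two_mul]
  | induction_disjoint f g hd _ hf hg =>
    rw [hd.interleave_mul, hd.interleave.cycleType_mul, hd.cycleType_mul, Multiset.map_add, hf, hg]

lemma support_swapFixedPoints (f : Perm α) :
    (swapFixedPoints f).support = ({x | f x = x} : Finset α).disjSum {x | f x = x} := by
  ext (x | x) <;> by_cases h : f x = x <;> simp [h]

lemma cycleType_swapFixedPoints (f : Perm α) :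
    (swapFixedPoints f).cycleType = Multiset.replicate #{x | f x = x} 2 := by
  have hrepl := cycleType_of_pow_prime_eq_one (swapFixedPoints_sq f)
  have hsum := sum_cycleType (swapFixedPoints f)
  rw [hrepl, Multiset.sum_replicate, support_swapFixedPoints, card_disjSum, smul_eq_mul] at hsum
  rw [hrepl, show Multiset.card (swapFixedPoints f).cycleType = #{x | f x = x} by omega]

lemma cycleType_sumCongr_mul_sumComm (τ σ : Perm α) :
    (sumCongr τ σ * sumComm α α).cycleType =
      (τ * σ).cycleType.map (2 * ·) + Multiset.replicate #{x | (τ * σ) x = x} 2 := by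
  have hconj : sumCongr τ σ * sumComm α α =
      sumCongr 1 σ * (sumCongr (τ * σ) 1 * sumComm α α) * (sumCongr 1 σ)⁻¹ := by
    ext (x | x) <;> simp
  rw [hconj, cycleType_conj, ← interleave_mul_swapFixedPoints,
    (disjoint_interleave_swapFixedPoints _).cycleType_mul, cycleType_interleave,
    cycleType_swapFixedPoints]

end Equiv.Perm

/-- If `π` is the permutation of `α ⊕ α` sending `inl x ↦ inr (σ x)` and
`inr y ↦ inl (τ y)`, then every cycle of `π` has even length, and the cycle type of `π`
is obtained by doubling every entry of the cycle type of `τ ∘ σ` and adding one `2`-cycle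
for each fixed point of `τ ∘ σ`. -/
theorem swap_block_perm_cycleType {α : Type*} [Fintype α] [DecidableEq α]
    (σ τ : Equiv.Perm α) (π : Equiv.Perm (α ⊕ α))
    (hl : ∀ x : α, π (Sum.inl x) = Sum.inr (σ x))
    (hr : ∀ y : α, π (Sum.inr y) = Sum.inl (τ y)) :
    (∀ ℓ ∈ π.cycleType, Even ℓ) ∧
    π.cycleType = ((τ * σ).cycleType.map fun ℓ => 2 * ℓ) +
      Multiset.replicate (Finset.univ.filter fun x : α => (τ * σ) x = x).card 2 := by
  have hπ : π = Perm.sumCongr τ σ * sumComm α α := by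
    ext (x | x) <;> simp [hl, hr]
  have hcycleType := hπ ▸ Perm.cycleType_sumCongr_mul_sumComm τ σ
  refine ⟨fun ℓ hℓ => ?_, hcycleType⟩
  rw [hcycleType, Multiset.mem_add, Multiset.mem_map] at hℓ
  rcases hℓ with ⟨k, -, rfl⟩ | hℓ
  · exact even_two_mul k
  · exact Multiset.eq_of_mem_replicate hℓ ▸ even_two
end

section
/- Let R be a commutative ring, α a finite type with decidable equality, and σ a permutation of α with permutation matrix P_σ over R (so (P_σ)_{ij} = 1 if σ(j) = i and 0 otherwise). Then in the polynomial ring R[X] one has det(I − X·P_σ) = (1 − X)^{f} · ∏_{ℓ ∈ cycleType(σ)} (1 − X^{ℓ}), where f is the number of fixed points of σ and the product runs over the multiset of cycle lengths of σ. Equivalently, for a permutation with cycle shape 1^{a₁}2^{a₂}⋯N^{a_N}, det(I − X·P_σ) = ∏_{j=1}^{N} (1 − X^{j})^{a_j}. -/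
/-!
Write `P_σ` for the permutation matrix of `σ`. If `σ` and `τ` are disjoint then
`(P_σ - 1) (P_τ - 1) = 0`, and expanding gives the matrix identity
`(1 - X P_σ) (1 - X P_τ) = (1 - X) (1 - X P_{στ})`. So `det (1 - X P_σ)` is multiplicative
along a decomposition of `σ` into disjoint cycles, up to powers of `1 - X`, which is a
non-zero-divisor in `R[X]`. For a single cycle `c` of length `ℓ` on `n` points, only the identity
and `c⁻¹` contribute to the Leibniz expansion of the determinant, giving
`(1 - X)^(n - ℓ) (1 - X^ℓ)`.
-/

open Polynomial Matrix Equiv Finset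

theorem one_sub_smul_mul_one_sub_smul {S A : Type*} [CommRing S] [Ring A] [Algebra S A]
    (x : S) {p q : A} (h : (p - 1) * (q - 1) = 0) :
    (1 - x • p) * (1 - x • q) = (1 - x) • (1 - x • (p * q)) := by
  obtain ⟨u, rfl⟩ : ∃ u, p = u + 1 := ⟨p - 1, (sub_add_cancel p 1).symm⟩
  obtain ⟨v, rfl⟩ : ∃ v, q = v + 1 := ⟨q - 1, (sub_add_cancel q 1).symm⟩
  simp only [add_sub_cancel_right] at h
  simp only [add_mul, mul_add, sub_mul, mul_sub, smul_mul_assoc, mul_smul_comm, h, one_mul,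
    mul_one]
  module

theorem Polynomial.isRegular_one_sub_X_pow {R : Type*} [CommRing R] (n : ℕ) :
    IsRegular ((1 - X : R[X]) ^ n) := by
  have h : (1 - X : R[X]) = -1 * (X - C 1) := by rw [C_1]; ring
  rw [h]
  exact (isUnit_one.neg.isRegular.mul (monic_X_sub_C 1).isRegular).pow n

theorem Nat.Partition.prod_map_parts_eq_prod_Icc {M : Type*} [CommMonoid M] {n : ℕ}
    (p : n.Partition) (f : ℕ → M) :
    (p.parts.map f).prod = ∏ j ∈ Icc 1 n, f j ^ p.parts.count j := by
  rw [prod_multiset_map_count]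
  refine prod_subset (fun j hj => ?_) fun j _ hj => ?_
  · have hj := Multiset.mem_toFinset.mp hj
    exact mem_Icc.mpr ⟨p.parts_pos hj, p.le_of_mem_parts hj⟩
  · rw [Multiset.count_eq_zero_of_notMem (mt Multiset.mem_toFinset.mpr hj), pow_zero]

namespace Matrix

variable {n R : Type*} [Fintype n] [DecidableEq n] [CommRing R]

theorem charpolyRev_one : (1 : Matrix n n R).charpolyRev = (1 - X) ^ Fintype.card n := by
  have h : (1 : Matrix n n R[X]) - (X : R[X]) • 1 = (1 - X : R[X]) • 1 := by
    rw [sub_smul, one_smul]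
  rw [charpolyRev, Matrix.map_one _ (map_zero _) (map_one _), h, det_smul, det_one, mul_one]

theorem charpolyRev_mul_charpolyRev {M N : Matrix n n R} (h : (M - 1) * (N - 1) = 0) :
    M.charpolyRev * N.charpolyRev = (1 - X) ^ Fintype.card n * (M * N).charpolyRev := by
  have h' := congrArg (C : R →+* R[X]).mapMatrix h
  rw [map_mul, map_sub, map_sub, map_one, map_zero] at h'
  rw [charpolyRev, charpolyRev, charpolyRev, ← det_mul,
    one_sub_smul_mul_one_sub_smul (p := M.map C) (q := N.map C) X h', det_smul, Matrix.map_mul]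

end Matrix

namespace Equiv.Perm

variable {α R : Type*} [DecidableEq α]

theorem permMatrix_apply [Zero R] [One R] (σ : Perm α) (i j : α) :
    σ.permMatrix R i j = if σ i = j then 1 else 0 := by
  simp [PEquiv.toMatrix_apply]

theorem Disjoint.permMatrix_add_permMatrix [AddCommMonoidWithOne R] {σ τ : Perm α}
    (h : σ.Disjoint τ) : σ.permMatrix R + τ.permMatrix R = (σ * τ).permMatrix R + 1 := by
  ext i j
  simp only [Matrix.add_apply, Matrix.one_apply, permMatrix_apply]
  rcases h i with hi | hi
  · rw [h.commute.eq, mul_apply, hi, add_comm]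
  · rw [mul_apply, hi]

variable [Fintype α]

theorem Disjoint.permMatrix_sub_one_mul_permMatrix_sub_one [Ring R] {σ τ : Perm α}
    (h : σ.Disjoint τ) : (σ.permMatrix R - 1) * (τ.permMatrix R - 1) = 0 := by
  calc (σ.permMatrix R - 1) * (τ.permMatrix R - 1)
      = σ.permMatrix R * τ.permMatrix R + 1 - (σ.permMatrix R + τ.permMatrix R) := by
        noncomm_ring
    _ = 0 := by rw [← permMatrix_mul, ← h.commute.eq, h.permMatrix_add_permMatrix, sub_self]

theorem card_filter_apply_eq_self (σ : Perm α) :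
    #{x | σ x = x} = Fintype.card α - #σ.support := by
  rw [← card_compl]
  congr 1
  ext x
  simp

theorem prod_ite_apply_eq_self {M : Type*} [CommMonoid M] (σ : Perm α) (a b : M) :
    ∏ x, (if σ x = x then a else b) = a ^ (Fintype.card α - #σ.support) * b ^ #σ.support := by
  rw [prod_ite, prod_const, prod_const, card_filter_apply_eq_self]
  rfl

theorem IsCycle.eq_one_or_eq_of_forall_apply_eq_or_eq {c π : Perm α} (hc : c.IsCycle)
    (h : ∀ x, π x = x ∨ π x = c x) : π = 1 ∨ π = c := by
  refine or_iff_not_imp_left.mpr fun hπ => ?_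
  obtain ⟨j, hj⟩ : ∃ j, π j ≠ j := by
    by_contra! hfix
    exact hπ (Equiv.ext hfix)
  have hjc : π j = c j := (h j).resolve_left hj
  have hj_supp : c j ≠ j := hjc ▸ hj
  have orbit : ∀ m : ℕ, π ((c ^ m) j) = (c ^ (m + 1)) j := by
    intro m
    induction m with
    | zero => simpa using hjc
    | succ m ih =>
      rw [pow_succ' c (m + 1), mul_apply]
      refine (h _).resolve_left fun hfix => ?_
      have : c ((c ^ m) j) = (c ^ m) j := by
        rw [← mul_apply, ← pow_succ', ← π.injective (hfix.trans ih.symm)]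
      exact mem_support.mp (pow_apply_mem_support.mpr (mem_support.mpr hj_supp)) this
  ext i
  by_cases hi : c i = i
  · exact (h i).elim (·.trans hi.symm) id
  · obtain ⟨m, rfl⟩ := hc.exists_pow_eq hj_supp hi
    rw [orbit m, pow_succ', mul_apply]

theorem count_parts_partition (σ : Perm α) (j : ℕ) :
    σ.partition.parts.count j =
      if j = 1 then Fintype.card α - #σ.support else σ.cycleType.count j := by
  rw [parts_partition, Multiset.count_add, Multiset.count_replicate]
  by_cases hj : j = 1
  · subst hj
    rw [if_pos rfl, if_pos rfl,
      Multiset.count_eq_zero_of_notMem fun h => (one_lt_of_mem_cycleType h).false, zero_add]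
  · rw [if_neg (Ne.symm hj), if_neg hj, add_zero]

theorem Disjoint.parts_partition_mul {σ τ : Perm α} (h : σ.Disjoint τ) :
    (σ * τ).partition.parts + Multiset.replicate (Fintype.card α) 1 =
      σ.partition.parts + τ.partition.parts := by
  have hle : #σ.support + #τ.support ≤ Fintype.card α :=
    h.card_support_mul ▸ card_le_univ _
  have hcard : Fintype.card α - (#σ.support + #τ.support) + Fintype.card α =
      (Fintype.card α - #σ.support) + (Fintype.card α - #τ.support) := by omega
  rw [parts_partition, parts_partition, parts_partition, h.cycleType_mul, h.card_support_mul,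
    add_assoc, ← Multiset.replicate_add, hcard, Multiset.replicate_add]
  abel

end Equiv.Perm

namespace Matrix

variable {α R : Type*} [Fintype α] [DecidableEq α] [CommRing R]

open Equiv.Perm

theorem charpolyRev_permMatrix_of_isCycle {c : Perm α} (hc : c.IsCycle) :
    (c.permMatrix R).charpolyRev =
      (1 - X) ^ (Fintype.card α - #c.support) * (1 - X ^ #c.support) := by
  rw [charpolyRev]
  set M : Matrix α α R[X] := 1 - (X : R[X]) • (c.permMatrix R).map C
  have entry : ∀ i j, M i j = (if i = j then 1 else 0) - if c i = j then X else 0 := by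
    intro i j
    simp [M, Matrix.one_apply]
  have h1c : (1 : Perm α) ≠ c⁻¹ := fun h => hc.ne_one (inv_eq_one.mp h.symm)
  rw [det_apply', ← sum_subset (subset_univ {1, c⁻¹}), sum_pair h1c]
  · have diag : ∀ i, M i i = if c i = i then 1 - X else 1 := by
      intro i
      rw [entry, if_pos rfl]
      split_ifs <;> simp
    have subdiag : ∀ i, M (c⁻¹ i) i = if c i = i then 1 - X else -X := by
      intro i
      have hfix : c.symm i = i ↔ c i = i := c.symm_apply_eq.trans eq_comm
      simp only [entry, coe_inv, apply_symm_apply, if_true]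
      by_cases h : c i = i
      · rw [if_pos (hfix.mpr h), if_pos h]
      · rw [if_neg (mt hfix.mp h), if_neg h, zero_sub]
    simp only [Perm.one_apply, diag, subdiag, prod_ite_apply_eq_self, sign_inv, hc.sign]
    have hsq : ((-1 : R[X]) ^ #c.support) * (-1) ^ #c.support = 1 := by rw [← mul_pow]; norm_num
    rw [Perm.sign_one, neg_pow (X : R[X])]
    push_cast
    linear_combination (-(1 - X) ^ (Fintype.card α - #c.support) * X ^ #c.support) * hsq
  · intro π _ hπ
    obtain ⟨i, hi, hic⟩ : ∃ i, π i ≠ i ∧ π i ≠ c⁻¹ i := by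
      by_contra! h
      simp only [mem_insert, mem_singleton] at hπ
      exact hπ <| hc.inv.eq_one_or_eq_of_forall_apply_eq_or_eq fun i =>
        or_iff_not_imp_left.mpr (h i)
    refine mul_eq_zero_of_right _ (prod_eq_zero (mem_univ i) ?_)
    rw [entry, if_neg hi, if_neg fun h => hic (eq_inv_iff_eq.mpr h), sub_zero]

theorem charpolyRev_permMatrix (σ : Perm α) :
    (σ.permMatrix R).charpolyRev = (σ.partition.parts.map fun j => 1 - X ^ j).prod := by
  induction σ using cycle_induction_on with
  | base_one => simp [parts_partition, charpolyRev_one]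
  | base_cycles c hc =>
    rw [charpolyRev_permMatrix_of_isCycle hc, parts_partition, hc.cycleType]
    simp [mul_comm]
  | induction_disjoint σ τ hd _ hσ hτ =>
    refine (isRegular_one_sub_X_pow (Fintype.card α)).left ?_
    beta_reduce
    have hmul : (σ * τ).permMatrix R = σ.permMatrix R * τ.permMatrix R := by
      rw [hd.commute.eq, permMatrix_mul]
    rw [hmul, ← charpolyRev_mul_charpolyRev hd.permMatrix_sub_one_mul_permMatrix_sub_one, hσ,
      hτ, ← Multiset.prod_add, ← Multiset.map_add, ← hd.parts_partition_mul,
      Multiset.map_add, Multiset.prod_add, Multiset.map_replicate, Multiset.prod_replicate,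
      pow_one, mul_comm]

end Matrix

/-- For a permutation `σ` of a finite type with permutation matrix `P` over a commutative
ring `R`, one has `det (I - X • P) = (1 - X)^f * ∏_{ℓ ∈ cycleType σ} (1 - X^ℓ)` in `R[X]`,
where `f` is the number of fixed points of `σ`.  Equivalently, for cycle shape
`1^{a₁} 2^{a₂} ⋯ N^{a_N}` (fixed points counted as 1-cycles) it equals
`∏_j (1 - X^j)^{a_j}`. -/
theorem det_one_sub_X_smul_permMatrix {R : Type*} [CommRing R]
    {α : Type*} [Fintype α] [DecidableEq α]
    (σ : Equiv.Perm α) (P : Matrix α α R)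
    (hP : ∀ i j : α, P i j = if σ j = i then 1 else 0) :
    Matrix.det ((1 : Matrix α α (Polynomial R)) - (Polynomial.X : Polynomial R) • P.map Polynomial.C) =
      ((1 : Polynomial R) - Polynomial.X) ^ (Finset.univ.filter fun x : α => σ x = x).card *
        (σ.cycleType.map fun ℓ => (1 : Polynomial R) - Polynomial.X ^ ℓ).prod ∧
    Matrix.det ((1 : Matrix α α (Polynomial R)) - (Polynomial.X : Polynomial R) • P.map Polynomial.C) =
      ∏ j ∈ Finset.Icc 1 (Fintype.card α),
        ((1 : Polynomial R) - Polynomial.X ^ j) ^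
          (if j = 1 then (Finset.univ.filter fun x : α => σ x = x).card
           else σ.cycleType.count j) := by
  have hP' : P = σ⁻¹.permMatrix R := by
    ext i j
    rw [hP, Perm.permMatrix_apply]
    exact if_congr (Perm.inv_eq_iff_eq.trans eq_comm).symm rfl rfl
  have hpart : σ⁻¹.partition = σ.partition :=
    Perm.partition_eq_of_isConj.mp (Perm.isConj_iff_cycleType_eq.mpr σ.cycleType_inv)
  have hdet : P.charpolyRev = (σ.partition.parts.map fun j => 1 - X ^ j).prod := by
    rw [hP', charpolyRev_permMatrix, hpart]
  change P.charpolyRev = _ ∧ P.charpolyRev = _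
  rw [hdet, σ.card_filter_apply_eq_self]
  constructor
  · rw [Perm.parts_partition, Multiset.map_add, Multiset.prod_add, Multiset.map_replicate,
      Multiset.prod_replicate, pow_one, mul_comm]
  · simp only [Nat.Partition.prod_map_parts_eq_prod_Icc, Perm.count_parts_partition]
end

section
/- The symmetric group on six letters admits an outer automorphism of order two: there exists an automorphism f of Equiv.Perm (Fin 6) such that f ∘ f = id, f ≠ id, and f is not inner, i.e. there is no g ∈ Equiv.Perm (Fin 6) with f equal to conjugation by g. -/
/-!
Conjugation by `g ∈ S₆` relabels the vertices of `K₆`, hence permutes its perfect matchings and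
its six 1-factorizations (partitions of the fifteen edges into five perfect matchings). Numbering
the 1-factorizations by `Fin 6` turns this action into a homomorphism `S₆ → S₆`. It sends the
transposition `(0 1)` to a product of three disjoint transpositions, so it is not inner, and it
is an involution because it is one on the generators `(0 1)` and `(0 1 2 3 4 5)`.
-/

open Equiv Function Set Pointwise

namespace MulAction

variable {G α ι : Type*} [Group G] [MulAction G α] {e : ι → α}

theorem smul_range_eq_of_smul_apply {g : G} (σ : Perm ι) (h : ∀ i, g • e i = e (σ i)) :
    g • range e = range e := by
  rw [smul_set_range, funext h, ← comp_def, σ.surjective.range_comp]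

noncomputable def permOfInvariantRange (he : Injective e) (hinv : ∀ g : G, g • range e = range e) :
    G →* Perm ι :=
  (Equiv.ofInjective e he).symm.permCongrHom.toMonoidHom.comp
    (toPermHom G ({ carrier := range e, smul_mem' := fun g _ hx => hinv g ▸ smul_mem_smul_set hx } :
      SubMulAction G α))

theorem apply_permOfInvariantRange (he : Injective e) (hinv : ∀ g : G, g • range e = range e)
    (g : G) (i : ι) : e (permOfInvariantRange he hinv g i) = g • e i := by
  simp only [permOfInvariantRange, MonoidHom.coe_comp, comp_apply, MulEquiv.coe_toMonoidHom,
    permCongrHom_coe, permCongr_apply, symm_symm, coe_toPermHom]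
  exact apply_ofInjective_symm he _

theorem permOfInvariantRange_eq_of_smul_apply (he : Injective e)
    (hinv : ∀ g : G, g • range e = range e) {g : G} (σ : Perm ι) (h : ∀ i, g • e i = e (σ i)) :
    permOfInvariantRange he hinv g = σ :=
  Equiv.ext fun i => he (by rw [apply_permOfInvariantRange he hinv, h])

end MulAction

namespace PermFinSix

open ConjAct Equiv.Perm

/-- The perfect matching `{ab, cd, ef}` of `K₆`, encoded as the fixed-point-free involution that
swaps the ends of each edge, so that conjugation acts on matchings by relabelling vertices. -/
def matching (a b c d e f : Fin 6) : Perm (Fin 6) := swap a b * swap c d * swap e f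

def oneFactorization : Fin 6 → Finset (Perm (Fin 6)) :=
  ![{matching 0 1 2 3 4 5, matching 0 2 1 4 3 5, matching 0 3 1 5 2 4, matching 0 4 1 3 2 5,
      matching 0 5 1 2 3 4},
    {matching 0 1 2 3 4 5, matching 0 2 1 5 3 4, matching 0 3 1 4 2 5, matching 0 4 1 2 3 5,
      matching 0 5 1 3 2 4},
    {matching 0 1 2 5 3 4, matching 0 2 1 3 4 5, matching 0 3 1 5 2 4, matching 0 4 1 2 3 5,
      matching 0 5 1 4 2 3},
    {matching 0 1 2 5 3 4, matching 0 2 1 4 3 5, matching 0 3 1 2 4 5, matching 0 4 1 5 2 3,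
      matching 0 5 1 3 2 4},
    {matching 0 1 2 4 3 5, matching 0 2 1 3 4 5, matching 0 3 1 4 2 5, matching 0 4 1 5 2 3,
      matching 0 5 1 2 3 4},
    {matching 0 1 2 4 3 5, matching 0 2 1 5 3 4, matching 0 3 1 2 4 5, matching 0 4 1 3 2 5,
      matching 0 5 1 4 2 3}]

theorem oneFactorization_injective : Injective oneFactorization := by decide

def transposition : Perm (Fin 6) := swap 0 1
def sixCycle : Perm (Fin 6) := finRotate 6
def tripleTransposition : Perm (Fin 6) := matching 0 1 2 3 4 5
def twoThreeCycle : Perm (Fin 6) := swap 1 4 * swap 2 3 * swap 3 5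

theorem closure_sixCycle_transposition :
    Subgroup.closure {sixCycle, transposition} = ⊤ :=
  closure_cycle_adjacent_swap (isCycle_finRotate (n := 4)) (support_finRotate (n := 4)) 0

theorem toConjAct_transposition_smul_oneFactorization (i : Fin 6) :
    toConjAct transposition • oneFactorization i = oneFactorization (tripleTransposition i) := by
  revert i; decide

theorem toConjAct_tripleTransposition_smul_oneFactorization (i : Fin 6) :
    toConjAct tripleTransposition • oneFactorization i = oneFactorization (transposition i) := by
  revert i; decide

theorem toConjAct_sixCycle_smul_oneFactorization (i : Fin 6) :
    toConjAct sixCycle • oneFactorization i = oneFactorization (twoThreeCycle i) := by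
  revert i; decide

theorem toConjAct_twoThreeCycle_smul_oneFactorization (i : Fin 6) :
    toConjAct twoThreeCycle • oneFactorization i = oneFactorization (sixCycle i) := by
  revert i; decide

theorem smul_range_oneFactorization (g : ConjAct (Perm (Fin 6))) :
    g • range oneFactorization = range oneFactorization := by
  have hgen : Subgroup.closure {sixCycle, transposition} ≤
      (MulAction.stabilizer (ConjAct (Perm (Fin 6))) (range oneFactorization)).comap
        (toConjAct : Perm (Fin 6) ≃* ConjAct (Perm (Fin 6))).toMonoidHom := by
    rw [Subgroup.closure_le]
    rintro _ (rfl | rfl) <;> rw [SetLike.mem_coe, Subgroup.mem_comap, MulAction.mem_stabilizer_iff]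
    · exact MulAction.smul_range_eq_of_smul_apply _ toConjAct_sixCycle_smul_oneFactorization
    · exact MulAction.smul_range_eq_of_smul_apply _ toConjAct_transposition_smul_oneFactorization
  exact hgen (closure_sixCycle_transposition ▸ Subgroup.mem_top (ofConjAct g))

noncomputable def exoticAut : Perm (Fin 6) →* Perm (Fin 6) :=
  (MulAction.permOfInvariantRange oneFactorization_injective smul_range_oneFactorization).comp
    toConjAct.toMonoidHom

theorem exoticAut_eq {g σ : Perm (Fin 6)}
    (h : ∀ i, toConjAct g • oneFactorization i = oneFactorization (σ i)) : exoticAut g = σ :=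
  MulAction.permOfInvariantRange_eq_of_smul_apply oneFactorization_injective
    smul_range_oneFactorization σ h

theorem exoticAut_involutive : Involutive exoticAut := by
  have h : exoticAut.comp exoticAut = MonoidHom.id _ := by
    refine MonoidHom.eq_of_eqOn_dense closure_sixCycle_transposition ?_
    rintro _ (rfl | rfl)
    · simp [exoticAut_eq toConjAct_sixCycle_smul_oneFactorization,
        exoticAut_eq toConjAct_twoThreeCycle_smul_oneFactorization]
    · simp [exoticAut_eq toConjAct_transposition_smul_oneFactorization,
        exoticAut_eq toConjAct_tripleTransposition_smul_oneFactorization]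
  exact DFunLike.congr_fun h

theorem exoticAut_not_inner : ¬ ∃ g, ∀ x, exoticAut x = g * x * g⁻¹ := by
  rintro ⟨g, hg⟩
  have h := card_support_conj (σ := g) (τ := transposition)
  rw [← hg, exoticAut_eq toConjAct_transposition_smul_oneFactorization] at h
  exact absurd h (by decide)

end PermFinSix

/-- The symmetric group `S₆` admits an outer automorphism of order two: an automorphism `f`
with `f ∘ f = id`, `f ≠ id`, and `f` not equal to conjugation by any element. -/
theorem S6_has_outer_automorphism_of_order_two :
    ∃ f : Equiv.Perm (Fin 6) ≃* Equiv.Perm (Fin 6),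
      (∀ x, f (f x) = x) ∧ f ≠ MulEquiv.refl (Equiv.Perm (Fin 6)) ∧
      ¬ ∃ g : Equiv.Perm (Fin 6), ∀ x, f x = g * x * g⁻¹ := by
  open PermFinSix in
  refine ⟨MulEquiv.ofBijective exoticAut exoticAut_involutive.bijective, exoticAut_involutive,
    fun h => exoticAut_not_inner ⟨1, fun x => ?_⟩, exoticAut_not_inner⟩
  simpa using DFunLike.congr_fun h x
end

section
/- For every natural number n ≠ 6, every automorphism of the symmetric group Equiv.Perm (Fin n) is inner: for every group automorphism f of Equiv.Perm (Fin n) there exists g ∈ Equiv.Perm (Fin n) such that f(x) = g·x·g⁻¹ for all x. -/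
/-!
An automorphism preserves involutions and the orders of centralizers. In `Sₙ` the centralizer
of a product of `k` disjoint transpositions has order `(n - 2k)! 2ᵏ k!`, which equals the order
`2 (n - 2)!` of the centralizer of a transposition only for `k = 1`, or for `n = 6` and `k = 3`.
Hence for `n ≠ 6` an automorphism `f` maps transpositions to transpositions. The images of the
transpositions `(a i)` pairwise fail to commute, so they all move a common point `x`: otherwise
three of them would form a triangle `(x y), (x z), (y z)`, making one of them the image of some
`(i j)`. Then `i ↦ f (a i) x` is a permutation `g` with `f (a i) = g (a i) g⁻¹`, and since the
transpositions `(a i)` generate `Sₙ`, `f` is conjugation by `g`.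
-/

open Equiv Equiv.Perm Nat

theorem Nat.two_pow_mul_factorial_succ_lt_factorial_two_mul {j : ℕ} (hj : 3 ≤ j) :
    2 ^ j * (j + 1)! < (2 * j)! := by
  induction j, hj using Nat.le_induction with
  | base => decide
  | succ j _ ih =>
    calc 2 ^ (j + 1) * (j + 1 + 1)! = 2 * (j + 2) * (2 ^ j * (j + 1)!) := by
          rw [factorial_succ (j + 1)]; ring
      _ < (2 * j + 2) * (2 * j + 1) * (2 * j)! := by
          apply Nat.mul_lt_mul_of_le_of_lt _ ih (by positivity); nlinarith
      _ = (2 * (j + 1))! := by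
          rw [show 2 * (j + 1) = 2 * j + 1 + 1 by ring, factorial_succ, factorial_succ]; ring

/-- The two sides are the orders of the centralizers, in `Sₙ`, of a product of `k` disjoint
transpositions and of a single transposition. -/
theorem Nat.eq_one_or_of_factorial_mul_two_pow_mul_factorial_eq {n k : ℕ} (hk : 1 ≤ k)
    (hkn : 2 * k ≤ n) (h : (n - 2 * k)! * 2 ^ k * k ! = (n - 2)! * 2) :
    k = 1 ∨ n = 6 ∧ k = 3 := by
  obtain ⟨m, rfl⟩ := Nat.exists_eq_add_of_le' hkn
  obtain ⟨j, rfl⟩ := Nat.exists_eq_add_of_le' hk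
  rw [show m + 2 * (j + 1) - 2 * (j + 1) = m by omega,
    show m + 2 * (j + 1) - 2 = m + 2 * j by omega, ← factorial_mul_ascFactorial m (2 * j),
    pow_succ] at h
  have key : 2 ^ j * (j + 1)! = (m + 1).ascFactorial (2 * j) := by
    have := factorial_pos m
    nlinarith [h]
  rcases lt_or_ge j 3 with hj | hj
  · obtain rfl | hm := Nat.eq_zero_or_pos m
    · interval_cases j
      · exact .inl rfl
      · simp [ascFactorial_succ] at key
      · exact .inr ⟨rfl, rfl⟩
    · have hle : (2 : ℕ).ascFactorial (2 * j) ≤ (m + 1).ascFactorial (2 * j) :=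
        ascFactorial_le _ (by omega)
      rw [← key] at hle
      interval_cases j
      · exact .inl rfl
      all_goals norm_num [ascFactorial_succ, factorial_succ] at hle
  · have hle : (2 * j)! ≤ (m + 1).ascFactorial (2 * j) :=
      one_ascFactorial (2 * j) ▸ ascFactorial_le _ (by omega)
    exact absurd key (two_pow_mul_factorial_succ_lt_factorial_two_mul hj |>.trans_le hle).ne

theorem MulEquiv.nat_card_centralizer_apply {G H : Type*} [Group G] [Group H] (f : G ≃* H)
    (x : G) : Nat.card (Subgroup.centralizer {f x}) = Nat.card (Subgroup.centralizer {x}) :=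
  Nat.card_congr <| (f.toEquiv.subtypeEquiv fun y => by
    simp only [Subgroup.mem_centralizer_singleton_iff, MulEquiv.toEquiv_eq_coe,
      MulEquiv.coe_toEquiv, ← map_mul, f.injective.eq_iff]).symm

namespace Equiv.Perm

variable {α : Type*}

theorem exists_apply_ne_apply_ne_of_not_commute {σ τ : Perm α} (h : ¬Commute σ τ) :
    ∃ x, σ x ≠ x ∧ τ x ≠ x := by
  by_contra! h'
  exact h (Disjoint.commute fun x => or_iff_not_imp_left.mpr (h' x))

variable [DecidableEq α]

theorem IsSwap.eq_swap_apply_of_apply_ne {σ : Perm α} (h : σ.IsSwap) {x : α} (hx : σ x ≠ x) :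
    σ = swap x (σ x) := by
  obtain ⟨a, b, -, rfl⟩ := h
  obtain ⟨-, rfl | rfl⟩ := swap_apply_ne_self_iff.mp hx
  · rw [swap_apply_left]
  · rw [swap_apply_right, swap_comm]

theorem not_commute_swap_swap {x y z : α} (hxy : x ≠ y) (hxz : x ≠ z) (hyz : y ≠ z) :
    ¬Commute (swap x y) (swap x z) := fun h => by
  have := congr($(h.eq) y)
  simp [swap_apply_of_ne_of_ne hxy.symm hyz, hxz] at this

theorem IsSwap.eq_swap_of_not_commute {ρ : Perm α} (hρ : ρ.IsSwap) {x y z : α} (hyz : y ≠ z)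
    (hρx : ρ x = x) (hy : ¬Commute (swap x y) ρ) (hz : ¬Commute (swap x z) ρ) :
    ρ = swap y z := by
  have moves (w : α) (hw : ¬Commute (swap x w) ρ) : ρ w ≠ w := by
    obtain ⟨p, hp, hρp⟩ := exists_apply_ne_apply_ne_of_not_commute hw
    obtain ⟨-, rfl | rfl⟩ := swap_apply_ne_self_iff.mp hp
    · exact absurd hρx hρp
    · exact hρp
  have hρ' := hρ.eq_swap_apply_of_apply_ne (moves y hy)
  have hρz := moves z hz
  rw [hρ', swap_apply_ne_self_iff] at hρz
  obtain ⟨-, rfl | hzy⟩ := hρz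
  · exact absurd rfl hyz
  · rw [hρ', ← hzy]

theorem monoidHom_ext_swap [Finite α] {M : Type*} [Monoid M] {f g : Perm α →* M} (a : α)
    (h : ∀ i, f (swap a i) = g (swap a i)) : f = g := by
  refine MonoidHom.eq_of_eqOn_denseM mclosure_isSwap ?_
  rintro _ ⟨p, q, hpq, rfl⟩
  rcases eq_or_ne p a with rfl | hp
  · exact h q
  rcases eq_or_ne q a with rfl | hq
  · rw [swap_comm]; exact h p
  rw [← swap_mul_swap_mul_swap hq hpq.symm, swap_comm q a]
  simp only [map_mul, h]

variable [Fintype α]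

theorem exists_cycleType_eq_replicate_two {σ : Perm α} (h2 : σ ^ 2 = 1) (h1 : σ ≠ 1) :
    ∃ k, 1 ≤ k ∧ σ.cycleType = Multiset.replicate k 2 := by
  have hσ : orderOf σ = 2 := orderOf_eq_prime h2 h1
  obtain ⟨k, hk⟩ := cycleType_prime_order (hσ ▸ Nat.prime_two)
  exact ⟨k + 1, by omega, hσ ▸ hk⟩

theorem nat_card_centralizer_of_cycleType_eq_replicate_two {σ : Perm α} {k : ℕ}
    (h : σ.cycleType = Multiset.replicate k 2) :
    Nat.card (Subgroup.centralizer {σ}) = (Fintype.card α - 2 * k)! * 2 ^ k * k ! := by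
  rw [nat_card_centralizer, h, Multiset.sum_replicate, Multiset.prod_replicate,
    Multiset.toFinset_replicate, smul_eq_mul, mul_comm k 2]
  split_ifs with hk
  · simp [hk]
  · simp

theorem isSwap_of_nat_card_centralizer_eq (hα : Fintype.card α ≠ 6) {σ τ : Perm α}
    (hσ2 : σ ^ 2 = 1) (hσ1 : σ ≠ 1) (hτ : τ.IsSwap)
    (h : Nat.card (Subgroup.centralizer {σ}) = Nat.card (Subgroup.centralizer {τ})) :
    σ.IsSwap := by
  obtain ⟨k, hk, hσ⟩ := exists_cycleType_eq_replicate_two hσ2 hσ1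
  have hkα : 2 * k ≤ Fintype.card α := by
    simpa [hσ, mul_comm] using sum_cycleType_le σ
  have hτ' : τ.cycleType = Multiset.replicate 1 2 := isSwap_iff_cycleType.mp hτ
  rw [nat_card_centralizer_of_cycleType_eq_replicate_two hσ,
    nat_card_centralizer_of_cycleType_eq_replicate_two hτ'] at h
  obtain rfl | ⟨hα6, -⟩ :=
    eq_one_or_of_factorial_mul_two_pow_mul_factorial_eq hk hkα (by simpa using h)
  · exact isSwap_iff_cycleType.mpr hσ
  · exact absurd hα6 hα

end Equiv.Perm

namespace MulEquiv

variable {α : Type*} [DecidableEq α]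

theorem isSwap_apply_of_card_ne_six [Fintype α] (hα : Fintype.card α ≠ 6)
    (f : Perm α ≃* Perm α) {σ : Perm α} (hσ : σ.IsSwap) : (f σ).IsSwap := by
  refine isSwap_of_nat_card_centralizer_eq hα ?_ ?_ hσ (f.nat_card_centralizer_apply σ)
  · obtain ⟨x, y, -, rfl⟩ := hσ
    rw [← map_pow, sq, swap_mul_self, map_one]
  · obtain ⟨x, y, hxy, rfl⟩ := hσ
    rw [Ne, map_eq_one_iff f f.injective, swap_eq_one_iff]
    exact hxy

theorem not_commute_apply_swap_apply_swap (f : Perm α ≃* Perm α) {a i j : α} (hi : i ≠ a)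
    (hj : j ≠ a) (hij : i ≠ j) : ¬Commute (f (swap a i)) (f (swap a j)) :=
  (commute_map_iff f.injective).not.mpr (not_commute_swap_swap hi.symm hj.symm hij)

/-- Otherwise the images of `(a i₁), (a i₂), (a i)` would form a triangle, forcing
`f (a i) = f (i₁ i₂)`. -/
theorem apply_swap_apply_ne_of_apply_swap_apply_ne (f : Perm α ≃* Perm α)
    (hf : ∀ σ : Perm α, σ.IsSwap → (f σ).IsSwap) {a i₁ i₂ i x : α} (hi₁ : i₁ ≠ a) (hi₂ : i₂ ≠ a)
    (hi₁₂ : i₂ ≠ i₁) (hx₁ : f (swap a i₁) x ≠ x) (hx₂ : f (swap a i₂) x ≠ x) (hi : i ≠ a) :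
    f (swap a i) x ≠ x := by
  intro hix
  have e₁ := (hf _ ⟨a, i₁, hi₁.symm, rfl⟩).eq_swap_apply_of_apply_ne hx₁
  have e₂ := (hf _ ⟨a, i₂, hi₂.symm, rfl⟩).eq_swap_apply_of_apply_ne hx₂
  set y := f (swap a i₁) x
  set z := f (swap a i₂) x
  have hyz : y ≠ z := fun h => hi₁₂ <| by
    have := congr($(f.injective (e₁.trans (h ▸ e₂.symm))) a)
    rwa [swap_apply_left, swap_apply_left, eq_comm] at this
  have hρ := (hf _ ⟨a, i, hi.symm, rfl⟩).eq_swap_of_not_commute hyz hix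
    (e₁ ▸ f.not_commute_apply_swap_apply_swap hi₁ hi (by rintro rfl; exact hx₁ hix))
    (e₂ ▸ f.not_commute_apply_swap_apply_swap hi₂ hi (by rintro rfl; exact hx₂ hix))
  have h₁₂ : f (swap i₁ i₂) = swap y z := by
    rw [← swap_mul_swap_mul_swap hi₂ hi₁₂, swap_comm i₂ a, map_mul, map_mul, e₁, e₂,
      swap_comm x z, swap_mul_swap_mul_swap hx₂ hyz.symm]
  have := congr($(f.injective (hρ.trans h₁₂.symm)) a)
  rw [swap_apply_left, swap_apply_of_ne_of_ne hi₁.symm hi₂.symm] at this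
  exact hi this

theorem exists_forall_apply_swap_apply_ne (f : Perm α ≃* Perm α)
    (hf : ∀ σ : Perm α, σ.IsSwap → (f σ).IsSwap) (a : α) :
    ∃ x, ∀ i ≠ a, f (swap a i) x ≠ x := by
  by_cases h1 : ∀ i, i = a
  · exact ⟨a, fun i hi => absurd (h1 i) hi⟩
  push Not at h1
  obtain ⟨i₁, hi₁⟩ := h1
  by_cases h2 : ∀ i ≠ a, i = i₁
  · obtain ⟨p, q, hpq, hpq'⟩ := hf _ ⟨a, i₁, hi₁.symm, rfl⟩
    refine ⟨p, fun i hi => h2 i hi ▸ ?_⟩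
    simpa [hpq'] using hpq.symm
  push Not at h2
  obtain ⟨i₂, hi₂, hi₁₂⟩ := h2
  obtain ⟨x, hx₁, hx₂⟩ := exists_apply_ne_apply_ne_of_not_commute
    (f.not_commute_apply_swap_apply_swap hi₁ hi₂ hi₁₂.symm)
  exact ⟨x, fun i => f.apply_swap_apply_ne_of_apply_swap_apply_ne hf hi₁ hi₂ hi₁₂ hx₁ hx₂⟩

theorem exists_forall_eq_conj_of_isSwap [Finite α] (f : Perm α ≃* Perm α)
    (hf : ∀ σ : Perm α, σ.IsSwap → (f σ).IsSwap) : ∃ g : Perm α, ∀ σ, f σ = g * σ * g⁻¹ := by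
  cases isEmpty_or_nonempty α
  · exact ⟨1, fun _ => Subsingleton.elim _ _⟩
  obtain ⟨a⟩ := ‹Nonempty α›
  obtain ⟨x, hx⟩ := f.exists_forall_apply_swap_apply_ne hf a
  set g₀ : α → α := fun i => f (swap a i) x
  have hg₀a : g₀ a = x := by simp [g₀, swap_self, ← Perm.one_def]
  have hg₀ (i : α) : f (swap a i) = swap (g₀ a) (g₀ i) := by
    rcases eq_or_ne i a with rfl | hi
    · rw [swap_self, swap_self, ← Perm.one_def, map_one]
    · rw [hg₀a]
      exact (hf _ ⟨a, i, hi.symm, rfl⟩).eq_swap_apply_of_apply_ne (hx i hi)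
  have hinj : Function.Injective g₀ := fun i j hij => by
    have := congr($(f.injective ((hg₀ i).trans (hij ▸ hg₀ j).symm)) a)
    rwa [swap_apply_left, swap_apply_left] at this
  set g := Equiv.ofBijective g₀ (Finite.injective_iff_bijective.mp hinj)
  have hconj : f.toMonoidHom = (MulAut.conj g).toMonoidHom :=
    monoidHom_ext_swap a fun i => by simp [hg₀, ← swap_apply_apply, g]
  exact ⟨g, fun σ => congr($hconj σ)⟩

end MulEquiv

/-- For `n ≠ 6`, every automorphism of the symmetric group `Sₙ` is inner: it is given by
conjugation by some permutation. -/
theorem symmGroup_automorphism_inner_of_ne_six (n : ℕ) (hn : n ≠ 6)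
    (f : Equiv.Perm (Fin n) ≃* Equiv.Perm (Fin n)) :
    ∃ g : Equiv.Perm (Fin n), ∀ x, f x = g * x * g⁻¹ :=
  f.exists_forall_eq_conj_of_isSwap fun _ =>
    f.isSwap_apply_of_card_ne_six (by rwa [Fintype.card_fin])
end

section
/- The cycle shapes 1⁴4² (four 1-cycles and two 4-cycles) and 1²2¹8¹ (two 1-cycles, one 2-cycle, one 8-cycle), which are the cycle shapes of the M₁₂ conjugacy classes 4B and 8B, are not balanced: for neither shape does there exist a positive integer M such that every occurring cycle length j divides M and the multiset of cycle lengths is invariant under j ↦ M/j. -/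
/-- A cycle shape, given by its multiplicity function `a : ℕ → ℕ` (so there are `a j`
cycles of length `j`), is balanced if there is a positive integer `M` such that every
occurring cycle length `j` divides `M` and `a (M / j) = a j`, i.e. the multiset of cycle
lengths is invariant under `j ↦ M / j`. -/
def BalancedShape (a : ℕ → ℕ) : Prop :=
  ∃ M : ℕ, 0 < M ∧ ∀ j : ℕ, a j ≠ 0 → j ∣ M ∧ a (M / j) = a j

/-- Balancing pairs the length `1` with `M`, so `M = 1` when no other length occurs as often
as `1`. -/
theorem BalancedShape.eq_one_of_ne_zero {a : ℕ → ℕ} (ha : BalancedShape a) (h1 : a 1 ≠ 0)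
    (hunique : ∀ j, a j = a 1 → j = 1) {j : ℕ} (hj : a j ≠ 0) : j = 1 := by
  obtain ⟨M, -, h⟩ := ha
  have hM : M = 1 := hunique M (by simpa using (h 1 h1).2)
  exact Nat.eq_one_of_dvd_one (hM ▸ (h j hj).1)

/-- The cycle shapes `1⁴4²` and `1²2¹8¹` (the `M₁₂` conjugacy classes `4B` and `8B`)
are not balanced. -/
theorem shape_4B_8B_not_balanced :
    ¬ BalancedShape (fun j => if j = 1 then 4 else if j = 4 then 2 else 0) ∧
    ¬ BalancedShape (fun j => if j = 1 then 2 else if j = 2 then 1 else if j = 8 then 1 else 0) := by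
  constructor
  · intro h
    exact absurd (h.eq_one_of_ne_zero (j := 4) (by simp)
      (fun j hj => by split_ifs at hj <;> omega) (by simp)) (by norm_num)
  · intro h
    exact absurd (h.eq_one_of_ne_zero (j := 8) (by simp)
      (fun j hj => by split_ifs at hj <;> omega) (by simp)) (by norm_num)
end

section
/- The eta-products of the cycle shapes 1⁴4² and 1²2¹8¹ (the M₁₂ conjugacy classes 4B and 8B) are not multiplicative: for g(τ) = η(τ)⁴·η(4τ)² and likewise for g(τ) = η(τ)²·η(2τ)·η(8τ), if a : ℕ → ℂ is any function such that g(τ) = ∑_{n=1}^{∞} a(n)·exp(iπnτ) for all τ in the upper half-plane ℍ, then it is not the case that a(1) = 1 and a(nm) = a(n)·a(m) for all coprime n, m; i.e. there exist coprime n, m with a(nm) ≠ a(n)·a(m), or a(1) ≠ 1. -/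
/-!
On the imaginary axis the nome `q = exp(iπτ)` runs through `(0, 1)`, and since
`η(jτ) = q^{j/12} ∏_{n ≥ 1} (1 - q^{2jn})`, an eta-product with `∑ j a_j = 12` equals
`q ∏_j ∏_{n ≥ 1} (1 - q^{2jn})^{a_j}` there. Truncating every Euler product changes this by
`O(q^{N+1})` as `q → 0⁺`, while the Fourier series differs from its partial sum by `O(q^{N+1})` as
well, so the first `N` Fourier coefficients are those of a finite product of polynomials, which
is computed exactly. For `1⁴4²` this gives `a 3 = -4`, `a 7 = 8`, `a 21 = 32 ≠ a 3 * a 7`; for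
`1²2¹8¹` it gives `a 3 = -2`, `a 5 = -2`, `a 15 = -4 ≠ a 3 * a 5`.
-/

/-- The Dedekind eta function
`η(τ) = exp(iπτ/12) · ∏_{n=1}^∞ (1 - exp(2πinτ))`. -/
noncomputable def dedekindEta (τ : ℂ) : ℂ :=
  Complex.exp ((Real.pi : ℂ) * Complex.I * τ / 12) *
    ∏' n : ℕ, (1 - Complex.exp (2 * (Real.pi : ℂ) * Complex.I * (n + 1) * τ))

open Filter Topology Asymptotics Finset

namespace CoeffList

/-- Integer polynomials as coefficient lists, constant term first. -/
def eval (x : ℝ) : List ℤ → ℝ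
  | [] => 0
  | c :: p => c + x * eval x p

def sub : List ℤ → List ℤ → List ℤ
  | p, [] => p
  | [], r => r.map (- ·)
  | a :: p, b :: r => (a - b) :: sub p r

def mulOneSubXPow (m : ℕ) (p : List ℤ) : List ℤ := sub p (List.replicate m 0 ++ p)

variable (x : ℝ)

@[simp] lemma eval_nil : eval x [] = 0 := rfl

@[simp] lemma eval_cons (c : ℤ) (p : List ℤ) : eval x (c :: p) = c + x * eval x p := rfl

lemma eval_map_neg (r : List ℤ) : eval x (r.map (- ·)) = -eval x r := by
  induction r with
  | nil => simp
  | cons b r ih => simp only [List.map_cons, eval_cons, Int.cast_neg, ih]; ring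

lemma eval_sub : ∀ p r : List ℤ, eval x (sub p r) = eval x p - eval x r
  | p, [] => by cases p <;> simp [sub]
  | [], b :: r => by simp only [sub, eval_map_neg, eval_cons, eval_nil]; ring
  | a :: p, b :: r => by simp only [sub, eval_cons, Int.cast_sub, eval_sub p r]; ring

lemma eval_replicate_zero_append (m : ℕ) (p : List ℤ) :
    eval x (List.replicate m 0 ++ p) = x ^ m * eval x p := by
  induction m with
  | zero => simp
  | succ m ih =>
    simp only [List.replicate_succ, List.cons_append, eval_cons, Int.cast_zero, ih]
    ring

lemma eval_mulOneSubXPow (m : ℕ) (p : List ℤ) :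
    eval x (mulOneSubXPow m p) = (1 - x ^ m) * eval x p := by
  rw [mulOneSubXPow, eval_sub, eval_replicate_zero_append]; ring

lemma eval_eq_eval_take_add (N : ℕ) (p : List ℤ) :
    eval x p = eval x (p.take N) + x ^ N * eval x (p.drop N) := by
  induction p generalizing N with
  | nil => simp
  | cons c p ih =>
    cases N with
    | zero => simp
    | succ N => simp only [List.take_succ_cons, List.drop_succ_cons, eval_cons, ih N]; ring

lemma eval_take_eq_sum (N : ℕ) (p : List ℤ) :
    eval x (p.take N) = ∑ n ∈ range N, (p.getD n 0 : ℝ) * x ^ n := by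
  induction p generalizing N with
  | nil => simp
  | cons c p ih =>
    cases N with
    | zero => simp
    | succ N =>
      rw [List.take_succ_cons, eval_cons, ih N, sum_range_succ', List.getD_cons_zero, pow_zero,
        mul_one, add_comm (c : ℝ), mul_sum]
      exact congrArg (· + (c : ℝ)) (sum_congr rfl fun n _ => by rw [List.getD_cons_succ]; ring)

lemma continuous_eval (p : List ℤ) : Continuous fun x => eval x p := by
  induction p with
  | nil => exact continuous_const
  | cons c p ih => exact continuous_const.add (continuous_id.mul ih)

end CoeffList

noncomputable def eulerProduct (x : ℝ) : ℝ := ∏' n : ℕ, (1 - x ^ (n + 1))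

lemma tprod_one_sub_mem_Icc {u : ℕ → ℝ} (hu0 : ∀ n, 0 ≤ u n) (hu1 : ∀ n, u n ≤ 1)
    (hu : Summable u) : ∏' n, (1 - u n) ∈ Set.Icc (1 - ∑' n, u n) 1 := by
  have hprod0 : ∀ n, 0 ≤ ∏ j ∈ Iio n, (1 - u j) := fun n =>
    prod_nonneg fun j _ => sub_nonneg.2 (hu1 j)
  have hle : ∀ n, u n * ∏ j ∈ Iio n, (1 - u j) ≤ u n := fun n =>
    mul_le_of_le_one_right (hu0 n) (prod_le_one (fun j _ => sub_nonneg.2 (hu1 j))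
      (fun j _ => sub_le_self _ (hu0 j)))
  have hsum : Summable fun n => u n * ∏ j ∈ Iio n, (1 - u j) :=
    hu.of_nonneg_of_le (fun n => mul_nonneg (hu0 n) (hprod0 n)) hle
  have hmul : Multipliable fun n => 1 - u n := by
    simpa [sub_eq_add_neg] using Real.multipliable_one_add_of_summable hu.neg
  rw [tprod_one_sub_ordered hsum hmul]
  exact ⟨sub_le_sub_left (hsum.tsum_le_tsum hle hu) 1,
    sub_le_self _ (tsum_nonneg fun n => mul_nonneg (hu0 n) (hprod0 n))⟩

lemma summable_pow_add_succ {x : ℝ} (hx0 : 0 ≤ x) (hx1 : x < 1) (K : ℕ) :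
    Summable fun n : ℕ => x ^ (n + K + 1) :=
  ((summable_geometric_of_lt_one hx0 hx1).mul_left (x ^ (K + 1))).congr fun n => by ring

lemma multipliable_one_sub_pow_add_succ {x : ℝ} (hx0 : 0 ≤ x) (hx1 : x < 1) (K : ℕ) :
    Multipliable fun n : ℕ => 1 - x ^ (n + K + 1) := by
  simpa [sub_eq_add_neg] using
    Real.multipliable_one_add_of_summable (summable_pow_add_succ hx0 hx1 K).neg

lemma tsum_pow_add_succ_le {x : ℝ} (hx0 : 0 ≤ x) (hx : x ≤ 1 / 2) (K : ℕ) :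
    ∑' n : ℕ, x ^ (n + K + 1) ≤ 2 * x ^ (K + 1) := by
  have hx1 : x < 1 := by linarith
  have hgeom : ∑' n : ℕ, x ^ (n + K + 1) = x ^ (K + 1) * (1 - x)⁻¹ := by
    rw [← tsum_geometric_of_lt_one hx0 hx1, ← tsum_mul_left]
    exact tsum_congr fun n => by ring
  rw [hgeom, mul_comm]
  gcongr
  rw [inv_le_comm₀ (by linarith) (by norm_num)]
  linarith

lemma eulerProduct_mem_Icc {x : ℝ} (hx0 : 0 ≤ x) (hx1 : x < 1) : eulerProduct x ∈ Set.Icc 0 1 :=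
  ⟨tprod_nonneg fun n => sub_nonneg.2 (pow_le_one₀ hx0 hx1.le),
    (tprod_one_sub_mem_Icc (fun n => by positivity) (fun n => pow_le_one₀ hx0 hx1.le)
      (by simpa using summable_pow_add_succ hx0 hx1 0)).2⟩

lemma abs_eulerProduct_sub_prod_le {x : ℝ} (hx0 : 0 ≤ x) (hx : x ≤ 1 / 2) (K : ℕ) :
    |eulerProduct x - ∏ n ∈ range K, (1 - x ^ (n + 1))| ≤ 2 * x ^ (K + 1) := by
  have hx1 : x < 1 := by linarith
  set P := ∏ n ∈ range K, (1 - x ^ (n + 1))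
  set T := ∏' n : ℕ, (1 - x ^ (n + K + 1))
  have hP : P ∈ Set.Icc 0 1 :=
    ⟨prod_nonneg fun n _ => sub_nonneg.2 (pow_le_one₀ hx0 hx1.le),
      prod_le_one (fun n _ => sub_nonneg.2 (pow_le_one₀ hx0 hx1.le))
        (fun n _ => sub_le_self _ (by positivity))⟩
  have hT : T ∈ Set.Icc (1 - ∑' n : ℕ, x ^ (n + K + 1)) 1 :=
    tprod_one_sub_mem_Icc (fun n => by positivity) (fun n => pow_le_one₀ hx0 hx1.le)
      (summable_pow_add_succ hx0 hx1 K)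
  have hsplit : eulerProduct x = P * T :=
    ((multipliable_one_sub_pow_add_succ hx0 hx1 K).prod_mul_tprod_nat_mul'
      (f := fun n => 1 - x ^ (n + 1))).symm
  have htail := tsum_pow_add_succ_le hx0 hx K
  rw [hsplit, abs_sub_comm, abs_of_nonneg (by nlinarith [hP.1, hP.2, hT.2])]
  nlinarith [hP.1, hP.2, hT.1, hT.2]

lemma isBigO_pow_of_le {M N : ℕ} (h : N ≤ M) :
    (fun q : ℝ => q ^ M) =O[𝓝[>] 0] fun q => q ^ N := by
  rcases h.eq_or_lt with rfl | h
  · exact isBigO_refl _ _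
  · exact (isLittleO_pow_pow h).isBigO.mono nhdsWithin_le_nhds

lemma isBigO_eulerProduct_pow_sub_prod {k : ℕ} (hk : 0 < k) (K : ℕ) :
    (fun q : ℝ => eulerProduct (q ^ k) - ∏ n ∈ range K, (1 - (q ^ k) ^ (n + 1)))
      =O[𝓝[>] 0] fun q => q ^ (K + 1) := by
  refine IsBigO.of_bound 2 ?_
  filter_upwards [Ioc_mem_nhdsGT (by norm_num : (0 : ℝ) < 1 / 2)] with q ⟨hq0, hq⟩
  have hqk : q ^ k ≤ q := pow_le_of_le_one hq0.le (by linarith) hk.ne'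
  rw [Real.norm_eq_abs, Real.norm_eq_abs, abs_of_nonneg (pow_nonneg hq0.le (K + 1))]
  calc _ ≤ 2 * (q ^ k) ^ (K + 1) := abs_eulerProduct_sub_prod_le (by positivity) (by linarith) K
    _ ≤ 2 * q ^ (K + 1) := by gcongr

lemma isBigO_eulerProduct_pow_one {k : ℕ} (hk : 0 < k) :
    (fun q : ℝ => eulerProduct (q ^ k)) =O[𝓝[>] 0] fun _ => (1 : ℝ) := by
  refine IsBigO.of_bound 1 ?_
  filter_upwards [Ioo_mem_nhdsGT (by norm_num : (0 : ℝ) < 1)] with q ⟨hq0, hq1⟩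
  have hE := eulerProduct_mem_Icc (pow_nonneg hq0.le k) (pow_lt_one₀ hq0.le hq1 hk.ne')
  rw [Real.norm_eq_abs, abs_of_nonneg hE.1]
  simpa using hE.2

namespace CoeffList

lemma isBigO_eval_one (p : List ℤ) : (fun q => eval q p) =O[𝓝[>] 0] fun _ => (1 : ℝ) :=
  (((continuous_eval p).tendsto 0).isBigO_one ℝ).mono nhdsWithin_le_nhds

lemma isBigO_eval_take_sub (N : ℕ) (p : List ℤ) :
    (fun q => eval q (p.take N) - eval q p) =O[𝓝[>] 0] fun q => q ^ N := by
  have h : (fun q : ℝ => q ^ N * eval q (p.drop N)) =O[𝓝[>] 0] fun q => q ^ N * 1 :=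
    (isBigO_refl _ _).mul (isBigO_eval_one _)
  simpa [eval_eq_eval_take_add _ N p] using h.neg_left

def mulEulerTrunc (N k : ℕ) : ℕ → List ℤ → List ℤ
  | 0, p => p
  | K + 1, p => (mulOneSubXPow (k * (K + 1)) (mulEulerTrunc N k K p)).take N

lemma isBigO_eval_mulEulerTrunc (N k K : ℕ) (p : List ℤ) :
    (fun q => eval q (mulEulerTrunc N k K p) - (∏ n ∈ range K, (1 - (q ^ k) ^ (n + 1))) * eval q p)
      =O[𝓝[>] 0] fun q => q ^ N := by
  induction K with
  | zero => simpa [mulEulerTrunc] using isBigO_zero _ _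
  | succ K ih =>
    have hfac : (fun q : ℝ => 1 - (q ^ k) ^ (K + 1)) =O[𝓝[>] 0] fun _ => (1 : ℝ) :=
      ((((continuous_const.sub ((continuous_pow k).pow (K + 1))).tendsto 0)).isBigO_one ℝ).mono
        nhdsWithin_le_nhds
    have h := (isBigO_eval_take_sub N (mulOneSubXPow (k * (K + 1)) (mulEulerTrunc N k K p))).add
      (by simpa using hfac.mul ih)
    refine h.congr' (Eventually.of_forall fun q => ?_) EventuallyEq.rfl
    simp only [mulEulerTrunc, eval_mulOneSubXPow, prod_range_succ, pow_mul]
    ring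

/-- Truncating modulo `x^N` after every factor keeps these lists short enough for `decide`. -/
def etaCoeffs (N : ℕ) : List ℕ → List ℤ
  | [] => [1]
  | j :: ρ => mulEulerTrunc N (2 * j) N (etaCoeffs N ρ)

lemma isBigO_eval_etaCoeffs (N : ℕ) {ρ : List ℕ} (hρ : ∀ j ∈ ρ, 0 < j) :
    (fun q => eval q (etaCoeffs N ρ) - (ρ.map fun j => eulerProduct (q ^ (2 * j))).prod)
      =O[𝓝[>] 0] fun q => q ^ N := by
  induction ρ with
  | nil => simpa [etaCoeffs] using isBigO_zero _ _
  | cons j ρ ih =>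
    have hj : 0 < 2 * j := by have := hρ j (by simp); omega
    have ih := ih fun i hi => hρ i (by simp [hi])
    have htrunc := isBigO_eval_mulEulerTrunc N (2 * j) N (etaCoeffs N ρ)
    have hprod : (fun q => (∏ n ∈ range N, (1 - (q ^ (2 * j)) ^ (n + 1)) -
        eulerProduct (q ^ (2 * j))) * eval q (etaCoeffs N ρ)) =O[𝓝[>] 0] fun q => q ^ N := by
      simpa using (((isBigO_eulerProduct_pow_sub_prod hj N).neg_left.trans
        (isBigO_pow_of_le N.le_succ)).mul (isBigO_eval_one (etaCoeffs N ρ)))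
    have hrest : (fun q => eulerProduct (q ^ (2 * j)) * (eval q (etaCoeffs N ρ) -
        (ρ.map fun i => eulerProduct (q ^ (2 * i))).prod)) =O[𝓝[>] 0] fun q => q ^ N := by
      simpa using (isBigO_eulerProduct_pow_one hj).mul ih
    refine ((htrunc.add hprod).add hrest).congr' (Eventually.of_forall fun q => ?_)
      EventuallyEq.rfl
    simp only [etaCoeffs, List.map_cons, List.prod_cons]
    ring

end CoeffList

/-- The cycle shape `1^{a₁} 2^{a₂} ⋯` is encoded as the list of its cycle lengths, `j` repeated
`a_j` times. -/
noncomputable def etaProduct (ρ : List ℕ) (τ : ℂ) : ℂ := (ρ.map fun j => dedekindEta (j * τ)).prod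

@[simp] lemma etaProduct_nil (τ : ℂ) : etaProduct [] τ = 1 := rfl

lemma etaProduct_cons (j : ℕ) (ρ : List ℕ) (τ : ℂ) :
    etaProduct (j :: ρ) τ = dedekindEta (j * τ) * etaProduct ρ τ := by
  simp [etaProduct]

/-- For `0 < q < 1`, the point of the imaginary axis whose nome `exp(iπτ)` is `q`. -/
noncomputable def tauOfNome (q : ℝ) : ℂ := ((-Real.log q / Real.pi : ℝ) : ℂ) * Complex.I

section Nome

open Complex

variable {q : ℝ}

lemma im_tauOfNome_pos (hq0 : 0 < q) (hq1 : q < 1) : 0 < (tauOfNome q).im := by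
  simpa [tauOfNome] using div_pos (neg_pos.2 (Real.log_neg hq0 hq1)) Real.pi_pos

lemma cexp_pi_I_mul_natCast_mul_tauOfNome (hq0 : 0 < q) (m : ℕ) :
    cexp (Real.pi * I * m * tauOfNome q) = ((q ^ m : ℝ) : ℂ) := by
  have h : (Real.pi : ℂ) * I * m * tauOfNome q = m * (Real.log q : ℂ) := by
    simp only [tauOfNome, ofReal_div, ofReal_neg]
    field_simp
    linear_combination (-(m * Real.log q) : ℂ) * I_sq
  rw [h, exp_nat_mul, ← ofReal_exp, Real.exp_log hq0, ofReal_pow]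

lemma dedekindEta_natCast_mul_tauOfNome (hq0 : 0 < q) (hq1 : q < 1) {j : ℕ} (hj : 0 < j) :
    dedekindEta (j * tauOfNome q) =
      cexp (Real.pi * I * j * tauOfNome q / 12) * (eulerProduct (q ^ (2 * j)) : ℂ) := by
  have hx0 : 0 ≤ q ^ (2 * j) := by positivity
  have hfac : ∀ n : ℕ, 1 - cexp (2 * Real.pi * I * (n + 1) * (j * tauOfNome q)) =
      ((1 - (q ^ (2 * j)) ^ (n + 1) : ℝ) : ℂ) := fun n => by
    have h : 2 * Real.pi * I * (n + 1) * (j * tauOfNome q) =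
        Real.pi * I * ((2 * j * (n + 1) : ℕ) : ℂ) * tauOfNome q := by
      push_cast
      ring
    rw [h, cexp_pi_I_mul_natCast_mul_tauOfNome hq0, ← pow_mul]
    push_cast
    rfl
  have hcast : ((eulerProduct (q ^ (2 * j)) : ℝ) : ℂ) =
      ∏' n : ℕ, ((1 - (q ^ (2 * j)) ^ (n + 1) : ℝ) : ℂ) :=
    ((by simpa using multipliable_one_sub_pow_add_succ hx0 (pow_lt_one₀ hq0.le hq1 (by omega)) 0 :
      Multipliable fun n : ℕ => 1 - (q ^ (2 * j)) ^ (n + 1)).hasProd.map ofRealHom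
        continuous_ofReal).tprod_eq.symm
  rw [dedekindEta, tprod_congr hfac, hcast, mul_assoc _ (j : ℂ)]

lemma etaProduct_tauOfNome (hq0 : 0 < q) (hq1 : q < 1) {ρ : List ℕ} (hρ : ∀ j ∈ ρ, 0 < j) :
    etaProduct ρ (tauOfNome q) = cexp (Real.pi * I * ρ.sum * tauOfNome q / 12) *
      ((ρ.map fun j => eulerProduct (q ^ (2 * j))).prod : ℝ) := by
  induction ρ with
  | nil => simp
  | cons j ρ ih =>
    rw [etaProduct_cons, dedekindEta_natCast_mul_tauOfNome hq0 hq1 (hρ j (by simp)),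
      ih fun i hi => hρ i (by simp [hi])]
    simp only [List.sum_cons, List.map_cons, List.prod_cons, Nat.cast_add, ofReal_mul]
    rw [show Real.pi * I * (j + ρ.sum) * tauOfNome q / 12 =
      Real.pi * I * j * tauOfNome q / 12 + Real.pi * I * ρ.sum * tauOfNome q / 12 by ring, exp_add]
    ring

end Nome

section PowerSeries

open Complex

lemma eq_zero_of_isBigO_sum {N : ℕ} {d : ℕ → ℂ}
    (h : (fun q : ℝ => ∑ n ∈ range N, d n * (q : ℂ) ^ n) =O[𝓝[>] 0] fun q => q ^ N) :
    ∀ n < N, d n = 0 := by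
  induction N generalizing d with
  | zero => intro n hn; omega
  | succ N ih =>
    have hsplit : ∀ q : ℝ, ∑ n ∈ range (N + 1), d n * (q : ℂ) ^ n =
        d 0 + q * ∑ n ∈ range N, d (n + 1) * (q : ℂ) ^ n := fun q => by
      rw [sum_range_succ', mul_sum, pow_zero, mul_one, add_comm]
      exact congrArg (d 0 + ·) (sum_congr rfl fun n _ => by ring)
    have hd0 : d 0 = 0 := by
      have hlim : Tendsto (fun q : ℝ => ∑ n ∈ range (N + 1), d n * (q : ℂ) ^ n) (𝓝[>] 0)
          (𝓝 (d 0)) := by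
        have hcont : Continuous fun q : ℝ => d 0 + q * ∑ n ∈ range N, d (n + 1) * (q : ℂ) ^ n := by
          fun_prop
        simpa [hsplit] using (hcont.tendsto 0).mono_left nhdsWithin_le_nhds
      refine tendsto_nhds_unique hlim (h.trans_tendsto ?_)
      simpa using ((continuous_pow (N + 1)).tendsto (0 : ℝ)).mono_left nhdsWithin_le_nhds
    have htail : (fun q : ℝ => ∑ n ∈ range N, d (n + 1) * (q : ℂ) ^ n)
        =O[𝓝[>] 0] fun q => q ^ N := by
      obtain ⟨c, hc⟩ := isBigO_iff.1 h
      refine isBigO_iff.2 ⟨c, ?_⟩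
      filter_upwards [hc, self_mem_nhdsWithin] with q hq (hq0 : 0 < q)
      rw [hsplit, hd0, zero_add, norm_mul, norm_real, Real.norm_of_nonneg hq0.le, pow_succ,
        norm_mul, Real.norm_of_nonneg hq0.le, mul_left_comm] at hq
      exact le_of_mul_le_mul_left (hq.trans_eq (by ring)) hq0
    intro n hn
    cases n with
    | zero => exact hd0
    | succ n => exact ih htail n (by omega)

lemma isBigO_tsum_sub_sum {b : ℕ → ℂ} (hb : Summable fun n => ‖b n‖ * (1 / 2 : ℝ) ^ n) (N : ℕ) :
    (fun q : ℝ => ∑' n, b n * (q : ℂ) ^ n - ∑ n ∈ range N, b n * (q : ℂ) ^ n)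
      =O[𝓝[>] 0] fun q => q ^ N := by
  refine IsBigO.of_bound ((∑' n, ‖b n‖ * (1 / 2 : ℝ) ^ n) * 2 ^ N) ?_
  filter_upwards [Ioc_mem_nhdsGT (by norm_num : (0 : ℝ) < 1 / 2)] with q ⟨hq0, hq⟩
  have hterm : ∀ n, ‖b (n + N) * (q : ℂ) ^ (n + N)‖ ≤
      ‖b (n + N)‖ * (1 / 2 : ℝ) ^ (n + N) * (2 ^ N * q ^ N) := fun n => by
    rw [norm_mul, norm_pow, norm_real, Real.norm_of_nonneg hq0.le, mul_assoc]
    gcongr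
    calc q ^ (n + N) = ((1 / 2) ^ (n + N) * 2 ^ (n + N)) * q ^ (n + N) := by
          rw [← mul_pow]; norm_num
      _ = (1 / 2) ^ (n + N) * (2 * q) ^ n * (2 ^ N * q ^ N) := by ring
      _ ≤ (1 / 2) ^ (n + N) * 1 * (2 ^ N * q ^ N) := by
          gcongr; exact pow_le_one₀ (by positivity) (by linarith)
      _ = _ := by ring
  have hshift : Summable fun n => ‖b (n + N)‖ * (1 / 2 : ℝ) ^ (n + N) :=
    (summable_nat_add_iff N).2 hb
  have hsum : Summable fun n => b n * (q : ℂ) ^ n := by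
    refine ((summable_nat_add_iff N).1 ?_)
    exact Summable.of_norm_bounded ((hshift.mul_right _)) hterm
  rw [← hsum.sum_add_tsum_nat_add N, add_sub_cancel_left, Real.norm_of_nonneg (by positivity)]
  calc ‖∑' n, b (n + N) * (q : ℂ) ^ (n + N)‖
      ≤ ∑' n, ‖b (n + N)‖ * (1 / 2 : ℝ) ^ (n + N) * (2 ^ N * q ^ N) :=
        tsum_of_norm_bounded (hshift.mul_right _).hasSum hterm
    _ ≤ (∑' n, ‖b n‖ * (1 / 2 : ℝ) ^ n) * (2 ^ N * q ^ N) := by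
        rw [tsum_mul_right]
        refine mul_le_mul_of_nonneg_right ?_ (by positivity)
        rw [← hb.sum_add_tsum_nat_add N]
        exact le_add_of_nonneg_left (by positivity)
    _ = _ := by ring

lemma coeff_eq_of_hasSum_of_isBigO {b c : ℕ → ℂ} {F : ℝ → ℂ} {N : ℕ}
    (hF : ∀ q : ℝ, 0 < q → q < 1 → HasSum (fun n => b n * (q : ℂ) ^ n) (F q))
    (h : (fun q => F q - ∑ n ∈ range N, c n * (q : ℂ) ^ n) =O[𝓝[>] 0] fun q => q ^ N) :
    ∀ n < N, b n = c n := by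
  have hb : Summable fun n => ‖b n‖ * (1 / 2 : ℝ) ^ n := by
    simpa [norm_mul, norm_pow] using (hF (1 / 2) (by norm_num) (by norm_num)).summable.norm
  have hdiff := h.sub (isBigO_tsum_sub_sum hb N)
  have hd : (fun q : ℝ => ∑ n ∈ range N, (b n - c n) * (q : ℂ) ^ n) =O[𝓝[>] 0] fun q => q ^ N := by
    refine hdiff.congr' ?_ EventuallyEq.rfl
    filter_upwards [Ioo_mem_nhdsGT (by norm_num : (0 : ℝ) < 1)] with q ⟨hq0, hq1⟩
    rw [(hF q hq0 hq1).tsum_eq]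
    simp only [sub_mul, sum_sub_distrib]
    ring
  exact fun n hn => sub_eq_zero.1 (eq_zero_of_isBigO_sum hd n hn)

end PowerSeries

open Complex CoeffList in
theorem coeff_eq_getD_etaCoeffs {ρ : List ℕ} (hρ : ρ.sum = 12) (hρ0 : ∀ j ∈ ρ, 0 < j) {a : ℕ → ℂ}
    (ha : ∀ τ : ℂ, 0 < τ.im → HasSum (fun n : ℕ => a (n + 1) *
      cexp (Real.pi * I * (n + 1) * τ)) (etaProduct ρ τ)) (N : ℕ) :
    ∀ n < N, a (n + 1) = ((etaCoeffs N ρ).getD n 0 : ℂ) := by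
  set E : ℝ → ℝ := fun q => (ρ.map fun j => eulerProduct (q ^ (2 * j))).prod
  refine coeff_eq_of_hasSum_of_isBigO (F := fun q => (E q : ℂ)) (fun q hq0 hq1 => ?_) ?_
  · have h := ha _ (im_tauOfNome_pos hq0 hq1)
    have hterm : ∀ m : ℕ, cexp (Real.pi * I * m * tauOfNome q) = (q : ℂ) ^ m := fun m => by
      rw [cexp_pi_I_mul_natCast_mul_tauOfNome hq0, ofReal_pow]
    rw [etaProduct_tauOfNome hq0 hq1 hρ0, hρ, show (Real.pi * I * ((12 : ℕ) : ℂ) * tauOfNome q / 12)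
      = Real.pi * I * ((1 : ℕ) : ℂ) * tauOfNome q by push_cast; ring, hterm, pow_one] at h
    simp_rw [← Nat.cast_succ, hterm] at h
    have hq : (q : ℂ) ≠ 0 := ofReal_ne_zero.2 hq0.ne'
    have h' := h.mul_left (q : ℂ)⁻¹
    rwa [inv_mul_cancel_left₀ hq, show (fun n : ℕ => (q : ℂ)⁻¹ * (a (n + 1) * (q : ℂ) ^ (n + 1)))
      = fun n => a (n + 1) * (q : ℂ) ^ n from funext fun n => by field_simp; ring] at h'
  · have hreal : (fun q => E q - eval q ((etaCoeffs N ρ).take N)) =O[𝓝[>] 0] fun q => q ^ N :=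
      ((isBigO_eval_etaCoeffs N hρ0).add (isBigO_eval_take_sub N _)).neg_left.congr'
        (Eventually.of_forall fun q => by ring) EventuallyEq.rfl
    refine (hreal.norm_left.congr' (Eventually.of_forall fun q => ?_) EventuallyEq.rfl).of_norm_left
    dsimp only
    rw [eval_take_eq_sum, ← norm_real]
    push_cast
    rfl

open CoeffList in
theorem etaProduct_not_multiplicative {ρ : List ℕ} (hρ : ρ.sum = 12) (hρ0 : ∀ j ∈ ρ, 0 < j)
    {m n : ℕ} (hm : 1 ≤ m) (hn : 1 ≤ n) (hmn : m.Coprime n)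
    (hcoeff : (etaCoeffs (m * n) ρ).getD (m * n - 1) 0 ≠
      (etaCoeffs (m * n) ρ).getD (m - 1) 0 * (etaCoeffs (m * n) ρ).getD (n - 1) 0)
    {a : ℕ → ℂ} (ha : ∀ τ : ℂ, 0 < τ.im → HasSum (fun n : ℕ => a (n + 1) *
      Complex.exp (Real.pi * Complex.I * (n + 1) * τ)) (etaProduct ρ τ)) :
    ¬ (a 1 = 1 ∧ ∀ n m : ℕ, 1 ≤ n → 1 ≤ m → Nat.Coprime n m → a (n * m) = a n * a m) := by
  rintro ⟨-, hmul⟩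
  have hc : ∀ i, 1 ≤ i → i ≤ m * n → a i = (etaCoeffs (m * n) ρ).getD (i - 1) 0 := by
    intro i hi1 hi
    obtain ⟨k, rfl⟩ := Nat.exists_eq_add_of_le' hi1
    exact coeff_eq_getD_etaCoeffs hρ hρ0 ha (m * n) k (by omega)
  have h := hmul m n hm hn hmn
  rw [hc _ (Nat.mul_pos hm hn) le_rfl, hc m hm (Nat.le_mul_of_pos_right m hn),
    hc n hn (Nat.le_mul_of_pos_left n hm)] at h
  exact hcoeff (by exact_mod_cast h)

lemma etaProduct_shape_4B (τ : ℂ) :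
    etaProduct [1, 1, 1, 1, 4, 4] τ = dedekindEta τ ^ 4 * dedekindEta (4 * τ) ^ 2 := by
  simp only [etaProduct_cons, etaProduct_nil, Nat.cast_one, Nat.cast_ofNat, one_mul]
  ring

lemma etaProduct_shape_8B (τ : ℂ) :
    etaProduct [1, 1, 2, 8] τ = dedekindEta τ ^ 2 * dedekindEta (2 * τ) * dedekindEta (8 * τ) := by
  simp only [etaProduct_cons, etaProduct_nil, Nat.cast_one, Nat.cast_ofNat, one_mul]
  ring

open CoeffList in
lemma etaCoeffs_shape_4B :
    etaCoeffs 21 [1, 1, 1, 1, 4, 4] =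
      [1, 0, -4, 0, 2, 0, 8, 0, -7, 0, 4, 0, -14, 0, -8, 0, 18, 0, 12, 0, 32] := by
  set_option maxRecDepth 10000 in decide

open CoeffList in
lemma etaCoeffs_shape_8B :
    etaCoeffs 15 [1, 1, 2, 8] = [1, 0, -2, 0, -2, 0, 4, 0, 1, 0, 2, 0, -2, 0, -4] := by
  set_option maxRecDepth 10000 in decide

/-- The eta-products `η(τ)⁴η(4τ)²` and `η(τ)²η(2τ)η(8τ)` of the cycle shapes `1⁴4²` and
`1²2¹8¹` (the `M₁₂` conjugacy classes `4B` and `8B`) are not multiplicative: for any Fourier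
expansion `g(τ) = ∑_{n=1}^∞ a n · exp(iπnτ)` valid on the upper half-plane, it is not the
case that `a 1 = 1` and `a (nm) = a n · a m` for all coprime `n, m ≥ 1`. -/
theorem shape_4B_8B_etaProducts_not_multiplicative :
    (∀ a : ℕ → ℂ,
      (∀ τ : ℂ, 0 < τ.im →
        HasSum (fun n : ℕ => a (n + 1) *
            Complex.exp ((Real.pi : ℂ) * Complex.I * (n + 1) * τ))
          (dedekindEta τ ^ 4 * dedekindEta (4 * τ) ^ 2)) →
      ¬ (a 1 = 1 ∧ ∀ n m : ℕ, 1 ≤ n → 1 ≤ m → Nat.Coprime n m → a (n * m) = a n * a m)) ∧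
    (∀ a : ℕ → ℂ,
      (∀ τ : ℂ, 0 < τ.im →
        HasSum (fun n : ℕ => a (n + 1) *
            Complex.exp ((Real.pi : ℂ) * Complex.I * (n + 1) * τ))
          (dedekindEta τ ^ 2 * dedekindEta (2 * τ) * dedekindEta (8 * τ))) →
      ¬ (a 1 = 1 ∧ ∀ n m : ℕ, 1 ≤ n → 1 ≤ m → Nat.Coprime n m → a (n * m) = a n * a m)) := by
  refine ⟨fun a ha => ?_, fun a ha => ?_⟩
  · refine etaProduct_not_multiplicative (ρ := [1, 1, 1, 1, 4, 4]) (m := 3) (n := 7) (by decide)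
      (by decide) (by norm_num) (by norm_num) (by norm_num) ?_
      (by simpa only [etaProduct_shape_4B] using ha)
    rw [etaCoeffs_shape_4B]
    decide
  · refine etaProduct_not_multiplicative (ρ := [1, 1, 2, 8]) (m := 3) (n := 5) (by decide)
      (by decide) (by norm_num) (by norm_num) (by norm_num) ?_
      (by simpa only [etaProduct_shape_8B] using ha)
    rw [etaCoeffs_shape_8B]
    decide
end
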